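/- Let p/q = [a_1,…,a_n] be an irreducible fraction with 0 < p/q < 1, p and q both odd (p/q ≡ 1/1 mod 2), a_1 ≥ 2, and N = a_1 + ⋯ + a_n − 1. Then in ℤ[t, t^{−1}]: S̃F[1, a_1−1, a_2,…,a_n](t) = (−1)^N · t^{s} · S̃F[a_1,…,a_n](t^{−1}), where s = Σ_{i=1}^N e_i and the signs e_i used on both sides are those of AT(p/q) (which coincide with those of AT((q−p)/q)). -/

import Mathlib

/-!
Ancestral triangles of continued fractions (Yamada / Farey diagrams),
following "Cluster variables and Alexander polynomials of 2-bridge knots".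
-/

noncomputable section

open scoped BigOperators

attribute [local instance] Classical.propDecidable

namespace TwoBridge

/-- The continued fraction `[a₁,…,aₙ] = 1/(a₁ + 1/(a₂ + ⋯ + 1/aₙ))`. -/
def cf : List ℕ → ℚ
  | [] => 0
  | a :: t => 1 / ((a : ℚ) + cf t)

/-- Partial sums `l_k = a₁ + ⋯ + a_k`. -/
def ell (a : List ℕ) (k : ℕ) : ℕ := (a.take k).sum

/-- The index of the fan containing the `i`-th triangle (1-based): the least `k` with
`i ≤ l_k − 1`.  Fan 1 consists of `T_1, …, T_{a₁−1}` and, for `k ≥ 2`, fan `k` consists of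
`T_{l_{k−1}}, …, T_{l_k − 1}`. -/
def fanIdx (a : List ℕ) (i : ℕ) : ℕ := sInf {k | i < ell a k}

/-- The `i`-th triangle (1-based) of the ancestral triangle of `[a₁,…,aₙ]` is a *right*
triangle iff it lies in an odd-indexed fan (first `a₁ − 1` triangles are right, the next
`a₂` left, the next `a₃` right, and so on alternately). -/
def isRight (a : List ℕ) (i : ℕ) : Prop := Odd (fanIdx a i)

/-- Vertex indices of the ancestral triangle: `0 ↦ 0/1`, `1 ↦ 1/1`, and `j + 1 ↦` the apex
(new vertex) of the triangle `T_j`.  `edgeIdx a i` is the pair of vertex indices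
(left endpoint, right endpoint) of the most recently created edge after stacking `i`
triangles; the triangle `T_{i+1}` is stacked on this edge. -/
def edgeIdx (a : List ℕ) : ℕ → ℕ × ℕ
  | 0 => (0, 1)
  | i + 1 => if isRight a (i + 1) then ((edgeIdx a i).1, i + 2) else (i + 2, (edgeIdx a i).2)

/-- The labels (numerator, denominator) of the endpoints of the active edge after stacking
`i` triangles; the new vertex of each triangle is labelled by the mediant of the two
endpoints of the edge it is stacked on. -/
def edgeLbl (a : List ℕ) : ℕ → (ℕ × ℕ) × (ℕ × ℕ)
  | 0 => ((0, 1), (1, 1))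
  | i + 1 =>
      if isRight a (i + 1) then
        ((edgeLbl a i).1,
          ((edgeLbl a i).1.1 + (edgeLbl a i).2.1, (edgeLbl a i).1.2 + (edgeLbl a i).2.2))
      else
        (((edgeLbl a i).1.1 + (edgeLbl a i).2.1, (edgeLbl a i).1.2 + (edgeLbl a i).2.2),
          (edgeLbl a i).2)

/-- The label (numerator, denominator) of the vertex with index `v`. -/
def vtxLabel (a : List ℕ) (v : ℕ) : ℕ × ℕ :=
  if v = 0 then (0, 1)
  else if v = 1 then (1, 1)
  else ((edgeLbl a (v - 2)).1.1 + (edgeLbl a (v - 2)).2.1,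
        (edgeLbl a (v - 2)).1.2 + (edgeLbl a (v - 2)).2.2)

/-- `u` and `w` are joined by an edge of the ancestral triangle. -/
def IsEdgeAT (a : List ℕ) (u w : ℕ) : Prop :=
  (u = 0 ∧ w = 1) ∨ (u = 1 ∧ w = 0) ∨
    (2 ≤ u ∧ (w = (edgeIdx a (u - 2)).1 ∨ w = (edgeIdx a (u - 2)).2)) ∨
    (2 ≤ w ∧ (u = (edgeIdx a (w - 2)).1 ∨ u = (edgeIdx a (w - 2)).2))

/-- A step of a path: an edge of the ancestral triangle along which the denominator of the
vertex label strictly decreases. -/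
def IsStep (a : List ℕ) (u w : ℕ) : Prop :=
  IsEdgeAT a u w ∧ (vtxLabel a w).2 < (vtxLabel a u).2

/-- `IsPathFrom a s γ` : `γ` is a path of the ancestral triangle of `a` starting at the
vertex with index `s` and ending at `0/1` or `1/1`, the denominator of the label strictly
decreasing along every edge. -/
def IsPathFrom (a : List ℕ) (s : ℕ) (γ : List ℕ) : Prop :=
  γ.head? = some s ∧ (γ.getLast? = some 0 ∨ γ.getLast? = some 1) ∧ List.Chain' (IsStep a) γ

/-- The (indices of the) triangles cut off to the left of the path by a single step from
vertex `u` down to vertex `w`. -/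
def stepLeft (a : List ℕ) (u w : ℕ) : Finset ℕ :=
  if 2 ≤ u ∧ w = (edgeIdx a (u - 2)).2 then Finset.Ioc (w - 1) (u - 1) else ∅

/-- The set `S_γ` of (indices of) triangles lying on the left side of the path `γ`. -/
def pathLeftSet (a : List ℕ) (γ : List ℕ) : Finset ℕ :=
  (γ.zip γ.tail).foldr (fun p s => stepLeft a p.1 p.2 ∪ s) ∅


/-- The unordered edge `{x, y}` is traversed by the path `γ`. -/
def onPath (γ : List ℕ) (x y : ℕ) : Prop :=
  (x, y) ∈ γ.zip γ.tail ∨ (y, x) ∈ γ.zip γ.tail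

/-- The three sides of the triangle `T_m` (apex index `m + 1`, base `edgeIdx a (m−1)`). -/
def triSides (a : List ℕ) (m : ℕ) : List (ℕ × ℕ) :=
  [(m + 1, (edgeIdx a (m - 1)).1), (m + 1, (edgeIdx a (m - 1)).2),
    ((edgeIdx a (m - 1)).1, (edgeIdx a (m - 1)).2)]

/-- The path `γ` does not go along two sides of the same triangle. -/
def NoTwoSides (a γ : List ℕ) : Prop :=
  ∀ m, 1 ≤ m → m ≤ a.sum - 1 →
    ¬ ∃ e₁ ∈ triSides a m, ∃ e₂ ∈ triSides a m,
        e₁ ≠ e₂ ∧ onPath γ e₁.1 e₁.2 ∧ onPath γ e₂.1 e₂.2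

/-- The label of a vertex reduced modulo 2 (so each label becomes `0/1`, `1/1` or `1/0`). -/
def par2 (a : List ℕ) (v : ℕ) : ℕ × ℕ := ((vtxLabel a v).1 % 2, (vtxLabel a v).2 % 2)

/-- The parity condition on the edges of the Seifert path: if `p/q ≡ 1/1 (mod 2)` it uses
only edges joining a vertex `≡ 1/1` to a vertex `≡ 1/0`; otherwise it uses only edges
joining a vertex `≡ 0/1` to a vertex `≡ 1/0`.  (The top vertex, labeled `p/q`, has index
`a.sum`.) -/
def SeifertParity (a γ : List ℕ) : Prop :=
  if par2 a a.sum = (1, 1) then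
    List.Chain'
      (fun u w => (par2 a u = (1, 1) ∧ par2 a w = (1, 0)) ∨
        (par2 a u = (1, 0) ∧ par2 a w = (1, 1))) γ
  else
    List.Chain'
      (fun u w => (par2 a u = (0, 1) ∧ par2 a w = (1, 0)) ∨
        (par2 a u = (1, 0) ∧ par2 a w = (0, 1))) γ

/-- `γ` is the Seifert path of the ancestral triangle of `a`: a path from the top vertex
that never goes along two sides of the same triangle and satisfies the parity condition. -/
def IsSeifert (a γ : List ℕ) : Prop :=
  IsPathFrom a a.sum γ ∧ NoTwoSides a γ ∧ SeifertParity a γ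

/-- The bottom edge of `Fan_k` (`k ≥ 2`), i.e. the edge shared by `Fan_k` and `Fan_{k−1}`
(the base edge of the first triangle `T_{l_{k−1}}` of `Fan_k`), lies on the path `γ`. -/
def bottomEdgeOn (a γ : List ℕ) (k : ℕ) : Prop :=
  onPath γ (edgeIdx a ((a.take (k - 1)).sum - 1)).1
    (edgeIdx a ((a.take (k - 1)).sum - 1)).2

/-- The signs `t_k ∈ {±1}` computed from the Seifert path `γ`:
`t₁ = +1` if `p/q ≡ 1/0` or `0/1 (mod 2)` and `t₁ = −1` if `p/q ≡ 1/1 (mod 2)`; and for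
`2 ≤ k`, `t_k = −t_{k−1}` if the bottom edge of `Fan_k` lies on `γ`, `t_k = t_{k−1}`
otherwise. -/
def tsgn (a γ : List ℕ) : ℕ → ℤ
  | 0 => 1
  | 1 => if par2 a a.sum = (1, 1) then -1 else 1
  | k + 2 => (if bottomEdgeOn a γ (k + 2) then -1 else 1) * tsgn a γ (k + 1)

/-- `Fan_k` lies on the left side of the path `γ`. -/
def FanLeft (a γ : List ℕ) (k : ℕ) : Prop :=
  ∀ j, 1 ≤ j → j ≤ a.sum - 1 → fanIdx a j = k → j ∈ pathLeftSet a γ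

/-- The position of the triangle `T_j` inside its fan, counted from the bottom
(so `T_j = T_i^{(k)}` with `k = fanIdx a j` and `i = posInFan a j`). -/
def posInFan (a : List ℕ) (j : ℕ) : ℕ :=
  if fanIdx a j = 1 then j else j - (a.take (fanIdx a j - 1)).sum + 1

/-- The sign `e_i = e(T_i^{(k)})` of a triangle, computed from the Seifert path `γ`:
`(−1)^i` if the bottom edge of `Fan_k` lies on `γ`; otherwise, for `k` odd, `+1` if
`Fan_k` is on the left side of `γ` and `(−1)^{i−1}` if on the right side, and for `k`
even, `+1` if `Fan_k` is on the right side and `(−1)^{i−1}` if on the left side. -/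
def esgn (a γ : List ℕ) (j : ℕ) : ℤ :=
  if bottomEdgeOn a γ (fanIdx a j) then (-1) ^ posInFan a j
  else if Odd (fanIdx a j) then
    (if FanLeft a γ (fanIdx a j) then 1 else (-1) ^ (posInFan a j - 1))
  else (if FanLeft a γ (fanIdx a j) then (-1) ^ (posInFan a j - 1) else 1)

/-- The quantity `d(k)` (taking the first applicable case): `a_k − 1` if `k` is odd and
`t_k = −1` or `k` is even and `t_k = +1`; `t_k` if the bottom edge of `Fan_k` lies on the
Seifert path; and `1` otherwise. -/
def dval (a γ : List ℕ) (k : ℕ) : ℤ :=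
  if (Odd k ∧ tsgn a γ k = -1) ∨ (Even k ∧ tsgn a γ k = 1) then (a.getD (k - 1) 0 : ℤ) - 1
  else if bottomEdgeOn a γ k then tsgn a γ k
  else 1

/-- `Σ_{k=1}^n d(k)`, so that `d = −(1/2) · dsum`. -/
def dsum (a γ : List ℕ) : ℤ := ∑ k ∈ Finset.Icc 1 a.length, dval a γ k

/-- The specialized `F`-polynomial: the path-sum `F`-polynomial of `l` with `y_i` replaced
by `−t^{e_i}`, as a Laurent polynomial in `t`. -/
def SFspec (l : List ℕ) (e : ℕ → ℤ) : LaurentPolynomial ℤ :=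
  ∑ᶠ γ ∈ {γ : List ℕ | IsPathFrom l l.sum γ},
    ∏ i ∈ pathLeftSet l γ, (-LaurentPolynomial.T (e i) : LaurentPolynomial ℤ)

/-! Reflecting `AT(p/q)` in its vertical axis gives `AT((q − p)/q)`, the ancestral triangle of
`[1, a₁ − 1, a₂, …, aₙ]`: each `T_i` keeps its index but changes from a right to a left triangle or
back, and the bottom vertices `0/1` and `1/1` trade places. Paths of the two triangles therefore
correspond under the swap `0 ↔ 1` of vertex indices, and the triangles left of a reflected path
are exactly those right of the original one. So each term of `S̃F[1, a₁ − 1, a₂, …]` is the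
product of `−t^{e_i}` over the complement of some `S_γ` in `{T_1, …, T_N}`, that is `(−1)^N t^s`
times the product of `−t^{−e_i}` over `S_γ`. -/

local notation "σ" => Equiv.swap (0 : ℕ) 1

lemma swap_of_two_le {x : ℕ} (hx : 2 ≤ x) : σ x = x :=
  Equiv.swap_apply_of_ne_of_ne (by omega) (by omega)

lemma swap_sub_one (x : ℕ) : σ x - 1 = x - 1 := by
  rcases x with _ | _ | x <;> simp [swap_of_two_le]

lemma swap_le_iff {x s : ℕ} (hs : 2 ≤ s) : σ x ≤ s ↔ x ≤ s := by
  rcases x with _ | _ | x <;> simp [swap_of_two_le] <;> omega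

section AncestralTriangle

variable (b : List ℕ)

lemma edgeLbl_den_pos (i : ℕ) : 1 ≤ (edgeLbl b i).1.2 ∧ 1 ≤ (edgeLbl b i).2.2 := by
  induction i with
  | zero => simp [edgeLbl]
  | succ i ih => rw [edgeLbl]; split_ifs <;> simp <;> omega

lemma edgeIdx_le (i : ℕ) : (edgeIdx b i).1 ≤ i + 1 ∧ (edgeIdx b i).2 ≤ i + 1 := by
  induction i with
  | zero => simp [edgeIdx]
  | succ i ih => rw [edgeIdx]; split_ifs <;> simp <;> omega

lemma edgeIdx_fst_ne_snd (i : ℕ) : (edgeIdx b i).1 ≠ (edgeIdx b i).2 := by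
  induction i with
  | zero => simp [edgeIdx]
  | succ i ih =>
    have := edgeIdx_le b i
    rw [edgeIdx]; split_ifs <;> simp <;> omega

lemma vtxLabel_of_two_le {u : ℕ} (hu : 2 ≤ u) :
    vtxLabel b u = ((edgeLbl b (u - 2)).1.1 + (edgeLbl b (u - 2)).2.1,
      (edgeLbl b (u - 2)).1.2 + (edgeLbl b (u - 2)).2.2) := by
  rw [vtxLabel, if_neg (by omega), if_neg (by omega)]

lemma vtxLabel_edgeIdx (i : ℕ) :
    vtxLabel b (edgeIdx b i).1 = (edgeLbl b i).1 ∧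
      vtxLabel b (edgeIdx b i).2 = (edgeLbl b i).2 := by
  induction i with
  | zero => simp [edgeIdx, edgeLbl, vtxLabel]
  | succ i ih =>
    have hapex := vtxLabel_of_two_le b (u := i + 2) (by omega)
    rw [edgeIdx, edgeLbl]
    split_ifs
    · exact ⟨ih.1, by simpa using hapex⟩
    · exact ⟨by simpa using hapex, ih.2⟩

/-- The apex of a triangle has a larger denominator than either vertex of its base, so no step
climbs from a base to its apex. -/
lemma isStep_iff {u w : ℕ} :
    IsStep b u w ↔ 2 ≤ u ∧ (w = (edgeIdx b (u - 2)).1 ∨ w = (edgeIdx b (u - 2)).2) := by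
  have apex_den {v : ℕ} (hv : 2 ≤ v) :
      (vtxLabel b (edgeIdx b (v - 2)).1).2 < (vtxLabel b v).2 ∧
        (vtxLabel b (edgeIdx b (v - 2)).2).2 < (vtxLabel b v).2 := by
    have := edgeLbl_den_pos b (v - 2)
    rw [(vtxLabel_edgeIdx b _).1, (vtxLabel_edgeIdx b _).2, vtxLabel_of_two_le b hv]
    omega
  constructor
  · rintro ⟨⟨h0, h1⟩ | ⟨h0, h1⟩ | hdown | ⟨hw, hup⟩, hlt⟩
    · subst h0 h1; simp [vtxLabel] at hlt
    · subst h0 h1; simp [vtxLabel] at hlt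
    · exact hdown
    · rcases hup with rfl | rfl
      · exact absurd hlt (apex_den hw).1.not_gt
      · exact absurd hlt (apex_den hw).2.not_gt
  · rintro ⟨hu, hw⟩
    refine ⟨Or.inr (Or.inr (Or.inl ⟨hu, hw⟩)), ?_⟩
    rcases hw with rfl | rfl
    exacts [(apex_den hu).1, (apex_den hu).2]

lemma IsStep.lt {u w : ℕ} (h : IsStep b u w) : w < u := by
  obtain ⟨hu, hw⟩ := (isStep_iff b).1 h
  have := edgeIdx_le b (u - 2)
  omega

lemma IsPathFrom.le_of_mem {s : ℕ} {γ : List ℕ} (h : IsPathFrom b s γ) {x : ℕ} (hx : x ∈ γ) :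
    x ≤ s := by
  obtain ⟨hhead, -, hchain⟩ := h
  obtain ⟨t, rfl⟩ : ∃ t, γ = s :: t := by
    cases γ with
    | nil => simp at hhead
    | cons y t => exact ⟨t, by simpa using hhead⟩
  have hdesc : List.Pairwise (· > ·) (s :: t) :=
    List.isChain_iff_pairwise.1 (hchain.imp fun _ _ h => h.lt b)
  rcases List.mem_cons.1 hx with rfl | hx
  · exact le_rfl
  · exact (List.rel_of_pairwise_cons hdesc hx).le

lemma pathLeftSet_cons_cons (x y : ℕ) (γ : List ℕ) :
    pathLeftSet b (x :: y :: γ) = stepLeft b x y ∪ pathLeftSet b (y :: γ) := rfl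

lemma IsPathFrom.of_cons_cons {b : List ℕ} {u v w : ℕ} {γ : List ℕ}
    (h : IsPathFrom b u (v :: w :: γ)) : v = u ∧ IsStep b v w ∧ IsPathFrom b w (w :: γ) := by
  obtain ⟨hhead, hlast, hchain⟩ := h
  obtain ⟨hstep, hchain⟩ := List.isChain_cons_cons.1 hchain
  exact ⟨by simpa using hhead, hstep, rfl, by simpa using hlast, hchain⟩

end AncestralTriangle

section Mirror

variable (a1 : ℕ) (rest : List ℕ)

lemma sum_mirror (h1 : 1 ≤ a1) : (1 :: (a1 - 1) :: rest).sum = (a1 :: rest).sum := by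
  simp only [List.sum_cons]; omega

lemma ell_mirror (h1 : 1 ≤ a1) (k : ℕ) :
    ell (1 :: (a1 - 1) :: rest) (k + 2) = ell (a1 :: rest) (k + 1) := by
  simp only [ell, List.take_succ_cons, List.sum_cons]; omega

lemma fanIdx_mirror (h1 : 1 ≤ a1) {i : ℕ} (hi1 : 1 ≤ i) (hi : i < (a1 :: rest).sum) :
    fanIdx (1 :: (a1 - 1) :: rest) i = fanIdx (a1 :: rest) i + 1 := by
  have hS : {k | i < ell (a1 :: rest) k}.Nonempty :=
    ⟨(a1 :: rest).length, by simpa [ell] using hi⟩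
  have hfan : i < ell (a1 :: rest) (fanIdx (a1 :: rest) i) := Nat.sInf_mem hS
  obtain ⟨k, hk⟩ : ∃ k, fanIdx (a1 :: rest) i = k + 1 := by
    refine Nat.exists_eq_add_one.2 (Nat.pos_of_ne_zero fun h => ?_)
    simp [h, ell] at hfan
  have hfan' : i < ell (1 :: (a1 - 1) :: rest) (k + 2) := by
    rwa [ell_mirror a1 rest h1, ← hk]
  have hS' : {k | i < ell (1 :: (a1 - 1) :: rest) k}.Nonempty := ⟨k + 2, hfan'⟩
  have hmem : i < ell (1 :: (a1 - 1) :: rest) (fanIdx (1 :: (a1 - 1) :: rest) i) :=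
    Nat.sInf_mem hS'
  obtain ⟨k', hk'⟩ : ∃ k', fanIdx (1 :: (a1 - 1) :: rest) i = k' + 2 := by
    rcases h : fanIdx (1 :: (a1 - 1) :: rest) i with _ | _ | k'
    · simp [h, ell] at hmem
    · simp [h, ell] at hmem; omega
    · exact ⟨k', rfl⟩
  have hle : fanIdx (a1 :: rest) i ≤ k' + 1 :=
    Nat.sInf_le (show i < ell (a1 :: rest) (k' + 1) by rwa [← ell_mirror a1 rest h1, ← hk'])
  have hle' : fanIdx (1 :: (a1 - 1) :: rest) i ≤ k + 2 := Nat.sInf_le hfan'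
  omega

lemma isRight_mirror (h1 : 1 ≤ a1) {i : ℕ} (hi1 : 1 ≤ i) (hi : i < (a1 :: rest).sum) :
    isRight (1 :: (a1 - 1) :: rest) i ↔ ¬ isRight (a1 :: rest) i := by
  rw [isRight, isRight, fanIdx_mirror a1 rest h1 hi1 hi]
  exact Nat.odd_add_one

/-- Mirroring exchanges left and right triangles, hence the two endpoints of every edge. -/
lemma edgeIdx_mirror (h1 : 1 ≤ a1) {i : ℕ} (hi : i < (a1 :: rest).sum) :
    edgeIdx (1 :: (a1 - 1) :: rest) i =
      (σ (edgeIdx (a1 :: rest) i).2, σ (edgeIdx (a1 :: rest) i).1) := by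
  induction i with
  | zero => simp [edgeIdx]
  | succ i ih =>
    have hflip := isRight_mirror a1 rest h1 (i := i + 1) (by omega) hi
    have hapex : σ (i + 2) = i + 2 := swap_of_two_le (by omega)
    rw [edgeIdx, edgeIdx, ih (by omega)]
    by_cases hr : isRight (a1 :: rest) (i + 1)
    · rw [if_neg (hflip.not_left.2 hr), if_pos hr, hapex]
    · rw [if_pos (hflip.2 hr), if_neg hr, hapex]

lemma isStep_mirror (h1 : 1 ≤ a1) {u w : ℕ} (hu : u ≤ (a1 :: rest).sum) :
    IsStep (1 :: (a1 - 1) :: rest) (σ u) (σ w) ↔ IsStep (a1 :: rest) u w := by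
  rw [isStep_iff, isStep_iff]
  by_cases hu2 : 2 ≤ u
  · rw [swap_of_two_le hu2, edgeIdx_mirror a1 rest h1 (by omega),
      (Equiv.injective _).eq_iff, (Equiv.injective _).eq_iff, or_comm]
  · have : ¬ 2 ≤ σ u := by rcases u with _ | _ | u <;> simp_all
    simp [hu2, this]

lemma isChain_isStep_mirror (h1 : 1 ≤ a1) {γ : List ℕ} (hγ : ∀ x ∈ γ, x ≤ (a1 :: rest).sum) :
    List.IsChain (IsStep (1 :: (a1 - 1) :: rest)) (γ.map σ) ↔
      List.IsChain (IsStep (a1 :: rest)) γ := by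
  rw [List.isChain_map]
  exact List.IsChain.iff_of_mem_imp fun x _ hx _ => isStep_mirror a1 rest h1 (hγ x hx)

lemma isPathFrom_mirror (h2 : 2 ≤ a1) {γ : List ℕ} :
    IsPathFrom (1 :: (a1 - 1) :: rest) (1 :: (a1 - 1) :: rest).sum (γ.map σ) ↔
      IsPathFrom (a1 :: rest) (a1 :: rest).sum γ := by
  have hS : 2 ≤ (a1 :: rest).sum := by simp only [List.sum_cons]; omega
  have hhead : (γ.map σ).head? = some (a1 :: rest).sum ↔ γ.head? = some (a1 :: rest).sum := by
    rw [List.head?_map]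
    rcases γ.head? with _ | x
    · simp
    · simp only [Option.map_some, Option.some.injEq,
        (Equiv.injective _).eq_iff' (swap_of_two_le hS)]
  have hlast : (γ.map σ).getLast? = some 0 ∨ (γ.map σ).getLast? = some 1 ↔
      γ.getLast? = some 0 ∨ γ.getLast? = some 1 := by
    rw [List.getLast?_map]
    rcases γ.getLast? with _ | _ | _ | x <;> simp [swap_of_two_le]
  have hbound (h : ∀ x ∈ γ.map σ, x ≤ (a1 :: rest).sum) : ∀ x ∈ γ, x ≤ (a1 :: rest).sum :=
    fun x hx => (swap_le_iff hS).1 (h _ (List.mem_map_of_mem hx))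
  rw [sum_mirror a1 rest (by omega)]
  constructor
  · intro h
    have hγ := hbound fun x hx => h.le_of_mem _ hx
    exact ⟨hhead.1 h.1, hlast.1 h.2.1, (isChain_isStep_mirror a1 rest (by omega) hγ).1 h.2.2⟩
  · intro h
    have hγ := fun x (hx : x ∈ γ) => h.le_of_mem _ hx
    exact ⟨hhead.2 h.1, hlast.2 h.2.1, (isChain_isStep_mirror a1 rest (by omega) hγ).2 h.2.2⟩

end Mirror

section LeftSets

open Finset

variable (a1 : ℕ) (rest : List ℕ)

lemma stepLeft_mirror (h1 : 1 ≤ a1) {u w : ℕ} (hu : u ≤ (a1 :: rest).sum)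
    (hstep : IsStep (a1 :: rest) u w) :
    (stepLeft (a1 :: rest) u w = Ioc (w - 1) (u - 1) ∧
        stepLeft (1 :: (a1 - 1) :: rest) (σ u) (σ w) = ∅) ∨
      (stepLeft (a1 :: rest) u w = ∅ ∧
        stepLeft (1 :: (a1 - 1) :: rest) (σ u) (σ w) = Ioc (w - 1) (u - 1)) := by
  obtain ⟨hu2, hw⟩ := (isStep_iff _).1 hstep
  have hne := edgeIdx_fst_ne_snd (a1 :: rest) (u - 2)
  simp only [stepLeft, swap_of_two_le hu2, edgeIdx_mirror a1 rest h1 (show u - 2 < _ by omega),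
    (Equiv.injective _).eq_iff, swap_sub_one, hu2, true_and]
  rcases hw with rfl | rfl
  · exact Or.inr ⟨if_neg hne, if_pos rfl⟩
  · exact Or.inl ⟨if_pos rfl, if_neg (Ne.symm hne)⟩

lemma pathLeftSet_mirror (h1 : 1 ≤ a1) {γ : List ℕ} {u : ℕ} (hγ : IsPathFrom (a1 :: rest) u γ)
    (hu : u ≤ (a1 :: rest).sum) :
    pathLeftSet (1 :: (a1 - 1) :: rest) (γ.map σ) =
        Icc 1 (u - 1) \ pathLeftSet (a1 :: rest) γ ∧
      pathLeftSet (a1 :: rest) γ ⊆ Icc 1 (u - 1) := by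
  induction γ generalizing u with
  | nil => simp [IsPathFrom] at hγ
  | cons v γ ih =>
    cases γ with
    | nil =>
      obtain ⟨hhead, hlast, -⟩ := hγ
      have : u = 0 ∨ u = 1 := by simp_all
      have hempty : Icc 1 (u - 1) = ∅ := Icc_eq_empty (by omega)
      simp [pathLeftSet, hempty]
    | cons w γ =>
      obtain ⟨rfl, hstep, htail⟩ := hγ.of_cons_cons
      have hwv := hstep.lt
      obtain ⟨ihL', ihL⟩ := ih htail (by omega)
      rw [List.map_cons] at ihL'
      rw [List.map_cons, List.map_cons, pathLeftSet_cons_cons, pathLeftSet_cons_cons, ihL']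
      -- `Icc 1 (v - 1)` is `Ioc (w - 1) (v - 1) ∪ Icc 1 (w - 1)`, and the step puts the first
      -- block into exactly one of the two left sets.
      rcases stepLeft_mirror a1 rest h1 hu hstep with ⟨hs, hs'⟩ | ⟨hs, hs'⟩ <;>
      · rw [hs, hs']
        constructor
        · ext x
          by_cases hx : x ∈ pathLeftSet (a1 :: rest) (w :: γ)
          · have := mem_Icc.1 (ihL hx)
            simp [hx] <;> omega
          · simp [hx]
            omega
        · intro x hx
          rcases mem_union.1 hx with hx | hx
          · simp at hx ⊢ <;> omega
          · have := mem_Icc.1 (ihL hx)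
            simp
            omega

end LeftSets

section Specialization

open Finset LaurentPolynomial

lemma prod_neg_T {R ι : Type*} [CommRing R] (s : Finset ι) (e : ι → ℤ) :
    ∏ i ∈ s, (-T (e i) : R[T;T⁻¹]) = (-1) ^ #s * T (∑ i ∈ s, e i) := by
  rw [prod_neg]
  congr 1
  simp only [T, AddMonoidAlgebra.prod_single, prod_const_one]

lemma prod_sdiff_eq_prod_mul_prod {M ι : Type*} [CommMonoid M] [DecidableEq ι]
    {s t : Finset ι} (hst : s ⊆ t) {f g : ι → M} (hfg : ∀ i ∈ s, f i * g i = 1) :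
    ∏ i ∈ t \ s, f i = (∏ i ∈ t, f i) * ∏ i ∈ s, g i := by
  rw [← prod_sdiff hst, mul_assoc, ← prod_mul_distrib, prod_congr rfl hfg, prod_const_one,
    mul_one]

variable (a1 : ℕ) (rest : List ℕ)

theorem SFspec_mirror (h2 : 2 ≤ a1) (e : ℕ → ℤ) :
    SFspec (1 :: (a1 - 1) :: rest) e =
      (-1) ^ ((a1 :: rest).sum - 1) * T (∑ i ∈ Icc 1 ((a1 :: rest).sum - 1), e i) *
        SFspec (a1 :: rest) (fun i => -e i) := by
  have hinv (γ : List ℕ) : (γ.map σ).map σ = γ := by simp [Function.comp_def]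
  have hbij : Set.BijOn (List.map σ) {γ | IsPathFrom (a1 :: rest) (a1 :: rest).sum γ}
      {γ | IsPathFrom (1 :: (a1 - 1) :: rest) (1 :: (a1 - 1) :: rest).sum γ} :=
    ⟨fun γ hγ => (isPathFrom_mirror a1 rest h2).2 hγ,
      (List.map_injective_iff.2 (Equiv.injective _)).injOn,
      fun γ hγ => ⟨γ.map σ, (isPathFrom_mirror a1 rest h2).1 (by rwa [hinv]), hinv γ⟩⟩
  unfold SFspec
  rw [mul_finsum_mem]
  refine (finsum_mem_eq_of_bijOn _ hbij fun γ hγ => ?_).symm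
  obtain ⟨hL', hL⟩ := pathLeftSet_mirror a1 rest (by omega) hγ le_rfl
  have hTT (i : ℕ) : (-T (e i) : ℤ[T;T⁻¹]) * -T (-e i) = 1 := by
    rw [neg_mul_neg, ← T_add, add_neg_cancel, T_zero]
  rw [hL', prod_sdiff_eq_prod_mul_prod hL fun i _ => hTT i, prod_neg_T (Icc _ _), Nat.card_Icc,
    Nat.add_sub_cancel]

end Specialization

theorem mirror_specialized_F_general (a1 : ℕ) (rest : List ℕ) (h2 : 2 ≤ a1) (γ : List ℕ) :
    SFspec (1 :: (a1 - 1) :: rest) (esgn (a1 :: rest) γ) =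
      (-1 : LaurentPolynomial ℤ) ^ ((a1 :: rest).sum - 1) *
        LaurentPolynomial.T
          (∑ i ∈ Finset.Icc 1 ((a1 :: rest).sum - 1), esgn (a1 :: rest) γ i) *
        SFspec (a1 :: rest) (fun i => -esgn (a1 :: rest) γ i) :=
  SFspec_mirror a1 rest h2 (esgn (a1 :: rest) γ)

/-- **Lemma (mirror specialized F-polynomial).**  Let `p/q = [a₁,…,aₙ]` be an irreducible
fraction with `0 < p/q < 1`, `p` and `q` both odd (`p/q ≡ 1/1 (mod 2)`), `a₁ ≥ 2`, and
`N = a₁ + ⋯ + aₙ − 1`.  Then, in `ℤ[t, t⁻¹]`,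
`S̃F[1, a₁−1, a₂,…,aₙ](t) = (−1)^N · t^s · S̃F[a₁,…,aₙ](t⁻¹)`, where `s = Σ_{i=1}^N e_i`
and the signs `e_i` used on both sides are those of `AT(p/q)` (computed from its Seifert
path `γ`); substituting `t⁻¹` is realized by negating all the exponents `e_i`. -/
theorem mirror_specialized_F (a1 : ℕ) (rest : List ℕ) (p q : ℕ)
    (h2 : 2 ≤ a1) (hpos : ∀ x ∈ rest, 0 < x)
    (hp : 0 < p) (hlt : p < q) (hcop : Nat.Coprime p q)
    (hpodd : p % 2 = 1) (hqodd : q % 2 = 1)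
    (hval : cf (a1 :: rest) = (p : ℚ) / q)
    (γ : List ℕ) (hγ : IsSeifert (a1 :: rest) γ) :
    SFspec (1 :: (a1 - 1) :: rest) (esgn (a1 :: rest) γ) =
      (-1 : LaurentPolynomial ℤ) ^ ((a1 :: rest).sum - 1) *
        LaurentPolynomial.T
          (∑ i ∈ Finset.Icc 1 ((a1 :: rest).sum - 1), esgn (a1 :: rest) γ i) *
        SFspec (a1 :: rest) (fun i => -esgn (a1 :: rest) γ i) :=
  mirror_specialized_F_general a1 rest h2 γ

end TwoBridge

end
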